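/- For every k ∈ ℕ, the set of positive integers that factor into a product of exactly k primes counted with multiplicity (i.e., {n ∈ ℕ : n ≥ 1 and Ω(n) = k}) is small, and likewise the set of positive integers with at most k prime factors counted with multiplicity (i.e., {n ∈ ℕ : n ≥ 1 and Ω(n) ≤ k}) is small. -/

import Mathlib

open Set Filter Topology

/-- An upper quasi-density on ℕ. -/
def IsUpperQuasiDensity (μ : Set ℕ → ℝ) : Prop :=
  μ Set.univ = 1 ∧
  (∀ X : Set ℕ, μ X ≤ 1) ∧
  (∀ X Y : Set ℕ, μ (X ∪ Y) ≤ μ X + μ Y) ∧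
  (∀ (X : Set ℕ) (k : ℕ), 0 < k → μ ((fun x => k * x) '' X) = μ X / k) ∧
  (∀ (X : Set ℕ) (h : ℕ), μ ((fun x => x + h) '' X) = μ X)

/-- An upper density on ℕ: a monotone upper quasi-density. -/
def IsUpperDensity (μ : Set ℕ → ℝ) : Prop :=
  IsUpperQuasiDensity μ ∧ ∀ X Y : Set ℕ, X ⊆ Y → μ X ≤ μ Y

/-- A set of naturals is small if every upper quasi-density vanishes on it. -/
def SmallSet (X : Set ℕ) : Prop :=
  ∀ μ : Set ℕ → ℝ, IsUpperQuasiDensity μ → μ X = 0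

/-- The upper asymptotic density of a set of naturals. -/
noncomputable def upperAsymptoticDensity (X : Set ℕ) : ℝ :=
  limsup (fun n : ℕ => ((X ∩ Set.Icc 1 n).ncard : ℝ) / n) atTop

/-- The arithmetic progression k·ℕ + h. -/
def AP (k h : ℕ) : Set ℕ := {x : ℕ | ∃ m : ℕ, x = k * m + h}

/-- A finite union of arithmetic progressions of ℕ. -/
def IsFinUnionAP (A : Set ℕ) : Prop :=
  ∃ s : Finset (ℕ × ℕ), (∀ p ∈ s, 0 < p.1) ∧ A = ⋃ p ∈ s, AP p.1 p.2

/-- The upper Buck density of a set of naturals. -/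
noncomputable def buckDensity (X : Set ℕ) : ℝ :=
  sInf {d : ℝ | ∃ A : Set ℕ, IsFinUnionAP A ∧ X ⊆ A ∧ d = upperAsymptoticDensity A}

/-- `rk k X` is the number of residues h ∈ [0, k-1] with X ∩ (k·ℕ + h) ≠ ∅. -/
noncomputable def rk (k : ℕ) (X : Set ℕ) : ℕ :=
  {h : ℕ | h < k ∧ (X ∩ AP k h).Nonempty}.ncard

/-- `wk μ k S` is the number of residues h ∈ [0, k-1] with μ(S ∩ (k·ℕ + h)) ≠ 0. -/
noncomputable def wk (μ : Set ℕ → ℝ) (k : ℕ) (S : Set ℕ) : ℕ :=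
  {h : ℕ | h < k ∧ μ (S ∩ AP k h) ≠ 0}.ncard

open scoped Nat

/-! Induction on `k`: a quasi-density need not be monotone, so the claim proved is that every
*subset* of `{n | Ω n = k}` is null. For such a subset `Y` and any finite set `P` of primes,
the elements of `Y` divisible by some `p ∈ P` form `p · Y'` with `Y' ⊆ {n | Ω n = k - 1}`,
hence are null; the rest is coprime to `q = ∏ P`, so it is covered by `φ q` residue classes
mod `q`, each of quasi-density at most `1 / q`. Thus `μ Y ≤ φ q / q = ∏ (1 - 1/p)`, which
tends to `0` as `P` runs through the primes below `N`, since `∑ 1/p` diverges. -/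

open Finset in
theorem Nat.totient_prod_div_prod_le_exp {P : Finset ℕ} (hP : ∀ p ∈ P, p.Prime) :
    (φ (∏ p ∈ P, p) : ℝ) / (∏ p ∈ P, p : ℕ) ≤ Real.exp (-∑ p ∈ P, (1 : ℝ) / p) := by
  have hq : (0 : ℝ) < ∏ p ∈ P, (p : ℝ) := prod_pos fun p hp => Nat.cast_pos.mpr (hP p hp).pos
  have euler := congrArg ((↑) : ℚ → ℝ) (Nat.totient_eq_mul_prod_factors (∏ p ∈ P, p))
  push_cast [Nat.primeFactors_prod hP] at euler ⊢
  rw [euler, mul_div_cancel_left₀ _ hq.ne', ← sum_neg_distrib, Real.exp_sum]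
  refine prod_le_prod (fun p hp => ?_) fun p _ => ?_
  · have : (1 : ℝ) ≤ p := by exact_mod_cast (hP p hp).one_lt.le
    linarith [inv_le_one_of_one_le₀ this]
  · rw [one_div]
    linarith [Real.add_one_le_exp (-(p : ℝ)⁻¹)]

theorem Nat.tendsto_sum_primesBelow_one_div :
    Tendsto (fun N : ℕ => ∑ p ∈ N.primesBelow, (1 : ℝ) / p) atTop atTop := by
  have hnonneg (n : ℕ) : 0 ≤ {p : ℕ | p.Prime}.indicator (fun n : ℕ => (1 : ℝ) / n) n :=
    Set.indicator_nonneg (fun _ _ => by positivity) n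
  convert (not_summable_iff_tendsto_nat_atTop_of_nonneg hnonneg).mp
    not_summable_one_div_on_primes using 2 with N
  simp only [Nat.primesBelow, Finset.sum_filter, Set.indicator_apply, Set.mem_ofPred_eq]

theorem Nat.primeFactorsList_length_prime_mul {p m : ℕ} (hp : p.Prime) (hm : m ≠ 0) :
    (p * m).primeFactorsList.length = m.primeFactorsList.length + 1 := by
  simp only [← ArithmeticFunction.cardFactors_apply]
  rw [ArithmeticFunction.cardFactors_mul hp.ne_zero hm,
    ArithmeticFunction.cardFactors_apply_prime hp, add_comm]

theorem Nat.setOf_primeFactorsList_length_eq_zero :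
    {n : ℕ | 1 ≤ n ∧ n.primeFactorsList.length = 0} = {1} := by
  ext n
  simp only [Set.mem_ofPred_eq, List.length_eq_zero_iff, Nat.primeFactorsList_eq_nil,
    Set.mem_singleton_iff]
  omega

theorem Nat.sep_dvd_eq_image_mul_preimage (p : ℕ) (Y : Set ℕ) :
    {n ∈ Y | p ∣ n} = (p * ·) '' ((p * ·) ⁻¹' Y) := by
  rw [Set.image_preimage_eq_inter_range]
  ext n
  exact and_congr_right' ⟨fun ⟨m, hm⟩ => ⟨m, hm.symm⟩, fun ⟨m, hm⟩ => ⟨m, hm.symm⟩⟩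

namespace IsUpperQuasiDensity

variable {μ : Set ℕ → ℝ}

theorem map_empty (hμ : IsUpperQuasiDensity μ) : μ ∅ = 0 := by
  have h := hμ.2.2.2.1 ∅ 2 two_pos
  rw [Set.image_empty] at h
  linarith

theorem nonneg (hμ : IsUpperQuasiDensity μ) (X : Set ℕ) : 0 ≤ μ X := by
  have h := hμ.2.2.1 X Xᶜ
  rw [Set.union_compl_self, hμ.1] at h
  linarith [hμ.2.1 Xᶜ]

theorem map_biUnion_le (hμ : IsUpperQuasiDensity μ) {ι : Type*} (s : Finset ι)
    (f : ι → Set ℕ) : μ (⋃ i ∈ s, f i) ≤ ∑ i ∈ s, μ (f i) := by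
  classical
  induction s using Finset.induction with
  | empty => simp [hμ.map_empty]
  | insert a s ha ih =>
    rw [Finset.set_biUnion_insert, Finset.sum_insert ha]
    linarith [hμ.2.2.1 (f a) (⋃ i ∈ s, f i)]

theorem map_biUnion_eq_zero (hμ : IsUpperQuasiDensity μ) {ι : Type*} {s : Finset ι}
    {f : ι → Set ℕ} (hf : ∀ i ∈ s, μ (f i) = 0) : μ (⋃ i ∈ s, f i) = 0 :=
  le_antisymm ((hμ.map_biUnion_le s f).trans (Finset.sum_eq_zero hf).le) (hμ.nonneg _)

theorem eq_zero_of_le_of_tendsto (hμ : IsUpperQuasiDensity μ) {Y : Set ℕ} {f : ℕ → ℝ}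
    (hf : Tendsto f atTop (𝓝 0)) (hY : ∀ N, μ Y ≤ f N) : μ Y = 0 :=
  le_antisymm (ge_of_tendsto' hf hY) (hμ.nonneg Y)

theorem le_one_div_of_subset_AP (hμ : IsUpperQuasiDensity μ) {q h : ℕ} (hq : 0 < q)
    {Y : Set ℕ} (hY : Y ⊆ AP q h) : μ Y ≤ 1 / q := by
  have hYeq : Y = (· + h) '' ((q * ·) '' {m | q * m + h ∈ Y}) := by
    ext x
    refine ⟨fun hx => ?_, ?_⟩
    · obtain ⟨m, rfl⟩ := hY hx
      exact ⟨q * m, ⟨m, hx, rfl⟩, rfl⟩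
    · rintro ⟨_, ⟨m, hm, rfl⟩, rfl⟩
      exact hm
  rw [hYeq, hμ.2.2.2.2, hμ.2.2.2.1 _ _ hq]
  gcongr
  exact hμ.2.1 _

theorem eq_zero_of_subset_singleton (hμ : IsUpperQuasiDensity μ) {a : ℕ} {Y : Set ℕ}
    (hY : Y ⊆ {a}) : μ Y = 0 := by
  refine hμ.eq_zero_of_le_of_tendsto tendsto_one_div_add_atTop_nhds_zero_nat fun N => ?_
  have hsub : Y ⊆ AP (N + 1) a := fun n hn => ⟨0, by simpa using hY hn⟩
  exact_mod_cast hμ.le_one_div_of_subset_AP N.succ_pos hsub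

theorem le_totient_div_of_coprime (hμ : IsUpperQuasiDensity μ) {q : ℕ} (hq : 0 < q)
    {Y : Set ℕ} (hY : ∀ n ∈ Y, q.Coprime n) : μ Y ≤ φ q / q := by
  have hcover : Y = ⋃ h ∈ {h ∈ Finset.range q | q.Coprime h}, Y ∩ AP q h := by
    ext n
    simp only [Set.mem_iUnion, Set.mem_inter_iff, Finset.mem_filter, Finset.mem_range]
    refine ⟨fun hn => ⟨n % q, ⟨Nat.mod_lt n hq, ?_⟩, hn, n / q, (Nat.div_add_mod n q).symm⟩,
      fun ⟨_, _, hn, _⟩ => hn⟩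
    rw [Nat.Coprime, Nat.gcd_comm, ← Nat.gcd_rec]
    exact hY n hn
  calc μ Y ≤ ∑ h ∈ {h ∈ Finset.range q | q.Coprime h}, μ (Y ∩ AP q h) := by
        conv_lhs => rw [hcover]
        exact hμ.map_biUnion_le _ _
    _ ≤ ∑ h ∈ {h ∈ Finset.range q | q.Coprime h}, (1 : ℝ) / q :=
        Finset.sum_le_sum fun h _ => hμ.le_one_div_of_subset_AP hq Set.inter_subset_right
    _ = φ q / q := by rw [Finset.sum_const, nsmul_eq_mul, mul_one_div, Nat.totient]

theorem le_totient_div_of_null_multiples (hμ : IsUpperQuasiDensity μ) {P : Finset ℕ}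
    (hP : ∀ p ∈ P, p.Prime) {Y : Set ℕ} (hnull : ∀ p ∈ P, μ {n ∈ Y | p ∣ n} = 0) :
    μ Y ≤ φ (∏ p ∈ P, p) / (∏ p ∈ P, p : ℕ) := by
  set q := ∏ p ∈ P, p
  have hq : 0 < q := Finset.prod_pos fun p hp => (hP p hp).pos
  have hcover : Y = (⋃ p ∈ P, {n ∈ Y | p ∣ n}) ∪ {n ∈ Y | q.Coprime n} := by
    ext n
    simp only [Set.mem_union, Set.mem_iUnion, Set.mem_ofPred_eq, exists_prop, q,
      Nat.coprime_prod_left_iff]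
    by_cases hdvd : ∃ p ∈ P, p ∣ n
    · obtain ⟨p, hp, hpn⟩ := hdvd
      exact ⟨fun hn => Or.inl ⟨p, hp, hn, hpn⟩, by tauto⟩
    · push Not at hdvd
      have hcop : ∀ p ∈ P, p.Coprime n := fun p hp =>
        (Nat.Prime.coprime_iff_not_dvd (hP p hp)).mpr (hdvd p hp)
      tauto
  calc μ Y ≤ μ (⋃ p ∈ P, {n ∈ Y | p ∣ n}) + μ {n ∈ Y | q.Coprime n} := by
        conv_lhs => rw [hcover]
        exact hμ.2.2.1 _ _
    _ ≤ φ q / q := by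
        rw [hμ.map_biUnion_eq_zero hnull, zero_add]
        exact hμ.le_totient_div_of_coprime hq fun n hn => hn.2

theorem eq_zero_of_subset_primeFactorsList_length_eq (hμ : IsUpperQuasiDensity μ) (k : ℕ)
    {Y : Set ℕ} (hY : Y ⊆ {n : ℕ | 1 ≤ n ∧ n.primeFactorsList.length = k}) : μ Y = 0 := by
  induction k generalizing Y with
  | zero => exact hμ.eq_zero_of_subset_singleton (Nat.setOf_primeFactorsList_length_eq_zero ▸ hY)
  | succ k ih =>
    have hnull (p : ℕ) (hp : p.Prime) : μ {n ∈ Y | p ∣ n} = 0 := by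
      have hquot : (p * ·) ⁻¹' Y ⊆ {n : ℕ | 1 ≤ n ∧ n.primeFactorsList.length = k} := by
        intro m hm
        obtain ⟨hpm, hlen⟩ := hY hm
        have hm0 : m ≠ 0 := by rintro rfl; simp at hpm
        rw [Nat.primeFactorsList_length_prime_mul hp hm0] at hlen
        exact ⟨Nat.one_le_iff_ne_zero.mpr hm0, by omega⟩
      rw [Nat.sep_dvd_eq_image_mul_preimage, hμ.2.2.2.1 _ _ hp.pos, ih hquot, zero_div]
    have hlim : Tendsto (fun N : ℕ => Real.exp (-∑ p ∈ N.primesBelow, (1 : ℝ) / p)) atTop (𝓝 0) :=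
      Real.tendsto_exp_atBot.comp (tendsto_neg_atTop_atBot.comp Nat.tendsto_sum_primesBelow_one_div)
    refine hμ.eq_zero_of_le_of_tendsto hlim fun N => ?_
    have hP (p : ℕ) (hp : p ∈ N.primesBelow) : p.Prime := Nat.prime_of_mem_primesBelow hp
    exact (hμ.le_totient_div_of_null_multiples hP fun p hp => hnull p (hP p hp)).trans
      (Nat.totient_prod_div_prod_le_exp hP)

end IsUpperQuasiDensity

/-- For every k, the set of positive integers with exactly k prime factors
(counted with multiplicity), and the set of those with at most k prime factors,
are small. -/
theorem smallSet_omega_eq_and_le (k : ℕ) :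
    SmallSet {n : ℕ | 1 ≤ n ∧ n.primeFactorsList.length = k} ∧
    SmallSet {n : ℕ | 1 ≤ n ∧ n.primeFactorsList.length ≤ k} := by
  have hle : {n : ℕ | 1 ≤ n ∧ n.primeFactorsList.length ≤ k}
      = ⋃ j ∈ Finset.range (k + 1), {n : ℕ | 1 ≤ n ∧ n.primeFactorsList.length = j} := by
    ext n
    simp only [Set.mem_ofPred_eq, Set.mem_iUnion, Finset.mem_range, exists_prop]
    exact ⟨fun ⟨h1, h2⟩ => ⟨_, by omega, h1, rfl⟩, fun ⟨j, hj, h1, h2⟩ => ⟨h1, by omega⟩⟩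
  refine ⟨fun μ hμ => hμ.eq_zero_of_subset_primeFactorsList_length_eq k subset_rfl,
    fun μ hμ => ?_⟩
  rw [hle]
  exact hμ.map_biUnion_eq_zero fun j _ =>
    hμ.eq_zero_of_subset_primeFactorsList_length_eq j subset_rfl
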